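/- For integers n ≥ 3, define ν_G(n) = (1 + (n−2)·h(n−1)) / (n + (n−2)·h(n−1)), where h(m) = 2^{-m} · Σ_{j=0}^{m} C(m,j)/(1 + (m−2j)²). Then ν_G(n) > 1/(√n + 1) for all n ≥ 3. -/

import Mathlib

noncomputable def h (n : ℕ) : ℝ :=
  (∑ j ∈ Finset.range (n + 1), (n.choose j : ℝ) / (1 + ((n : ℝ) - 2 * j) ^ 2)) / 2 ^ n

noncomputable def νG (n : ℕ) : ℝ :=
  (1 + ((n : ℝ) - 2) * h (n - 1)) / ((n : ℝ) + ((n : ℝ) - 2) * h (n - 1))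

/-! With `h m = S m / 2 ^ m`, `S = weightedChooseSum`, the identity
`(1 + N²) / (1 + (N - 2j)²) = 1 + 4 j (N - j) / (1 + (N - 2j)²)` and
`j (N - j) C(N, j) = N (N - 1) C(N - 2, j - 1)` give the recursion
`h (m + 2) = (1 + (m + 2)(m + 1) h m) / (1 + (m + 2)²)`.
By AM-GM, `√(m + 1) √(m + 3) ≤ m + 2`, the recursion carries the bound
`√(m + 1) - 1 ≤ (m - 1) h m` from `m` to `m + 2`; it holds at `m = 4` and `m = 7`, hence for all
`m ≥ 6`. Since `ν_G(n) = (1 + t) / (n + t)` with `t = (n - 2) h (n - 1) ≥ √n - 1`, this gives the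
claim for `n ≥ 7`, and `n ≤ 6` is a finite computation. -/

noncomputable def weightedChooseSum (n : ℕ) : ℝ :=
  ∑ j ∈ Finset.range (n + 1), (n.choose j : ℝ) / (1 + ((n : ℝ) - 2 * j) ^ 2)

lemma succ_mul_sub_mul_choose_add_two (m j : ℕ) (hj : j ≤ m + 1) :
    ((j : ℝ) + 1) * ((m : ℝ) + 1 - j) * (m + 2).choose (j + 1)
      = (m + 2) * (m + 1) * m.choose j := by
  have h₁ : ((m : ℝ) + 2) * (m + 1).choose j = (m + 2).choose (j + 1) * (j + 1) := by
    exact_mod_cast Nat.add_one_mul_choose_eq (m + 1) j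
  have h₂ : (m.choose j : ℝ) * (m + 1) = (m + 1).choose j * ((m : ℝ) + 1 - j) := by
    have := Nat.choose_mul_succ_eq m j
    rw [← Nat.cast_inj (R := ℝ)] at this
    push_cast [Nat.cast_sub hj] at this
    exact this
  linear_combination (-((m : ℝ) + 1 - j)) * h₁ - ((m : ℝ) + 2) * h₂

lemma one_add_sq_mul_div (N x c : ℝ) :
    (1 + N ^ 2) * (c / (1 + (N - 2 * x) ^ 2))
      = c + 4 * x * (N - x) * c / (1 + (N - 2 * x) ^ 2) := by
  have : 1 + (N - 2 * x) ^ 2 ≠ 0 := by positivity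
  field_simp
  ring

lemma weightedChooseSum_add_two (m : ℕ) :
    (1 + ((m : ℝ) + 2) ^ 2) * weightedChooseSum (m + 2)
      = 2 ^ (m + 2) + 4 * ((m : ℝ) + 2) * ((m : ℝ) + 1) * weightedChooseSum m := by
  have hN : ((m + 2 : ℕ) : ℝ) = (m : ℝ) + 2 := by push_cast; ring
  rw [weightedChooseSum, ← hN, Finset.mul_sum]
  simp_rw [one_add_sq_mul_div]
  rw [Finset.sum_add_distrib, ← Nat.cast_sum, Nat.sum_range_choose, Nat.cast_pow, Nat.cast_ofNat]
  congr 1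
  rw [Finset.sum_range_succ', Finset.sum_range_succ, weightedChooseSum, Finset.mul_sum, hN]
  simp only [CharP.cast_eq_zero, mul_zero, zero_mul, zero_div, add_zero, Nat.cast_add,
    Nat.cast_one, sub_self]
  refine Finset.sum_congr rfl fun i hi ↦ ?_
  have hc := succ_mul_sub_mul_choose_add_two m i (by simp at hi; omega)
  rw [show (m : ℝ) + 2 - 2 * (i + 1) = m - 2 * i by ring, mul_div_assoc']
  congr 1
  linear_combination 4 * hc

lemma h_add_two (m : ℕ) :
    h (m + 2) = (1 + ((m : ℝ) + 2) * ((m : ℝ) + 1) * h m) / (1 + ((m : ℝ) + 2) ^ 2) := by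
  have hm : h m = weightedChooseSum m / 2 ^ m := rfl
  have hm2 : h (m + 2) = weightedChooseSum (m + 2) / 2 ^ (m + 2) := rfl
  rw [hm, hm2, eq_div_iff (by positivity), pow_add]
  field_simp
  linear_combination weightedChooseSum_add_two m

lemma sqrt_add_three_sub_one_le (M y : ℝ) (hM : 1 < M) (hy : √(M + 1) - 1 ≤ (M - 1) * y) :
    √(M + 3) - 1 ≤ (M + 1) * ((1 + (M + 2) * (M + 1) * y) / (1 + (M + 2) ^ 2)) := by
  set a := √(M + 1)
  set b := √(M + 3)
  have ha : a ^ 2 = M + 1 := Real.sq_sqrt (by linarith)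
  have hb : b ^ 2 = M + 3 := Real.sq_sqrt (by linarith)
  have ha0 : 0 < a := Real.sqrt_pos.mpr (by linarith)
  -- AM-GM: `a b ≤ (a² + b²) / 2 = M + 2`
  have hab : a * (b - 1) ≤ M + 2 - a := by nlinarith [sq_nonneg (a - b)]
  -- after clearing denominators the claim reads `0 < P`, and modulo `a² = M + 1` the
  -- product `a P` is a sum of nonnegative terms
  set P := (M + 2) * (M + 1) ^ 2 * (a - 1) + (M - 1) * (M + 1)
    - (M - 1) * (b - 1) * (1 + (M + 2) ^ 2)
  have hP : a * P = 2 * (M + 2) * ((a - 1) ^ 2 + 1)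
      + (M - 1) * (1 + (M + 2) ^ 2) * ((M + 2 - a) - a * (b - 1)) := by
    linear_combination ((M + 2) * (M + 1) ^ 2 - 2 * (M + 2)) * ha
  have hP0 : 0 < P := by
    refine pos_of_mul_pos_right (hP ▸ ?_) ha0.le
    have : 0 ≤ (M - 1) * (1 + (M + 2) ^ 2) * ((M + 2 - a) - a * (b - 1)) :=
      mul_nonneg (by nlinarith) (by linarith)
    nlinarith [sq_nonneg (a - 1)]
  rw [mul_div_assoc', le_div_iff₀ (by positivity)]
  refine le_of_mul_le_mul_left ?_ (by linarith : 0 < M - 1)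
  nlinarith [mul_le_mul_of_nonneg_left hy (by nlinarith : 0 ≤ (M + 2) * (M + 1) ^ 2)]

lemma sqrt_sub_one_le_mul_h_add_two (m : ℕ) (hm : 2 ≤ m)
    (ih : √((m : ℝ) + 1) - 1 ≤ ((m : ℝ) - 1) * h m) :
    √(((m + 2 : ℕ) : ℝ) + 1) - 1 ≤ (((m + 2 : ℕ) : ℝ) - 1) * h (m + 2) := by
  have hM : (1 : ℝ) < m := by exact_mod_cast hm
  rw [h_add_two]
  convert sqrt_add_three_sub_one_le m (h m) hM ih using 3 <;> push_cast <;> ring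

lemma sqrt_sub_one_le_mul_h_add_two_mul (m k : ℕ) (hm : 2 ≤ m)
    (hbase : √((m : ℝ) + 1) - 1 ≤ ((m : ℝ) - 1) * h m) :
    √(((m + 2 * k : ℕ) : ℝ) + 1) - 1 ≤ (((m + 2 * k : ℕ) : ℝ) - 1) * h (m + 2 * k) := by
  induction k with
  | zero => simpa using hbase
  | succ k ih => exact sqrt_sub_one_le_mul_h_add_two (m + 2 * k) (by omega) ih

lemma sqrt_sub_one_le_mul_h (m : ℕ) (hm : 6 ≤ m) : √((m : ℝ) + 1) - 1 ≤ ((m : ℝ) - 1) * h m := by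
  obtain ⟨k, rfl | rfl⟩ := Nat.even_or_odd' m
  · have h4 : h 4 = 41 / 85 := by norm_num [h, Finset.sum_range_succ, Nat.choose]
    have hs : √5 ≤ 208 / 85 := Real.sqrt_le_iff.mpr ⟨by norm_num, by norm_num⟩
    have := sqrt_sub_one_le_mul_h_add_two_mul 4 (k - 2) (by norm_num) (by
      rw [h4]; norm_num; linarith)
    rwa [show 4 + 2 * (k - 2) = 2 * k by omega] at this
  · have h7 : h 7 = 101 / 325 := by norm_num [h, Finset.sum_range_succ, Nat.choose]
    have hs : √8 ≤ 931 / 325 := Real.sqrt_le_iff.mpr ⟨by norm_num, by norm_num⟩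
    have := sqrt_sub_one_le_mul_h_add_two_mul 7 (k - 3) (by norm_num) (by
      rw [h7]; norm_num; linarith)
    rwa [show 7 + 2 * (k - 3) = 2 * k + 1 by omega] at this

lemma one_div_sqrt_add_one_lt_div (x t : ℝ) (hx : 1 ≤ x) (hxt : x - √x - 1 < t * √x) :
    1 / (√x + 1) < (1 + t) / (x + t) := by
  set s := √x
  have hs : s ^ 2 = x := Real.sq_sqrt (by linarith)
  have hs1 : 1 ≤ s := Real.one_le_sqrt.mpr hx
  have hxt0 : 0 < x + t := by
    refine pos_of_mul_pos_left ?_ (by linarith : 0 ≤ s)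
    nlinarith [mul_nonneg (sub_nonneg.mpr hs1) (sq_nonneg (s + 1))]
  rw [div_lt_div_iff₀ (by positivity) hxt0]
  nlinarith

theorem stmt_12 (n : ℕ) (hn : 3 ≤ n) : 1 / (Real.sqrt n + 1) < νG n := by
  refine one_div_sqrt_add_one_lt_div _ _ (by norm_cast; omega) ?_
  have hn0 : 0 ≤ √(n : ℝ) := Real.sqrt_nonneg _
  have hnn : √(n : ℝ) ^ 2 = n := Real.sq_sqrt (Nat.cast_nonneg _)
  rcases le_or_gt n 6 with hn6 | hn6
  · interval_cases n <;> norm_num [h, Finset.sum_range_succ, Nat.choose] <;>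
      push_cast at hnn hn0 <;> nlinarith
  · obtain ⟨m, rfl⟩ : ∃ m, n = m + 1 := ⟨n - 1, by omega⟩
    have hm := sqrt_sub_one_le_mul_h m (by omega)
    simp only [Nat.add_sub_cancel, Nat.cast_add, Nat.cast_one] at hnn hn0 ⊢
    nlinarith
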